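/- arXiv:2306.01134 — 5 statements merged into one kernel-verified Lean document; each statement's English description precedes it below -/
import Mathlib

section
/- Let q be a prime power and a, b ∈ F_{q^6}. Define A as the trace Tr_{q^2}^{q^6}(a^{q+1} - a^{q^2+q}) and γ = b + b^q. If A ≠ 0 and a^{q^5+1} + a^{q^4+q^3} - a^{q^5+q^4} - γ + γ^q - γ^{q^2} = 0, then adding this equation to its q^3-Frobenius image yields a contradiction; i.e., a^{q^5+1} + a^{q^4+q^3} - a^{q^5+q^4} - γ + γ^q - γ^{q^2} ≠ 0 whenever A ≠ 0. -/
theorem stmt8 (p k q : ℕ) (hp : p.Prime) (hk : 0 < k) (hq : q = p ^ k)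
    (F : Type*) [Field F] [Fintype F] (hF : Fintype.card F = q ^ 6)
    (a b γ : F) (hγ : γ = b + b ^ q)
    (hA : (a ^ (q + 1) - a ^ (q ^ 2 + q))
      + (a ^ (q + 1) - a ^ (q ^ 2 + q)) ^ q ^ 2
      + (a ^ (q + 1) - a ^ (q ^ 2 + q)) ^ q ^ 4 ≠ 0) :
    a ^ (q ^ 5 + 1) + a ^ (q ^ 4 + q ^ 3) - a ^ (q ^ 5 + q ^ 4)
      - γ + γ ^ q - γ ^ q ^ 2 ≠ 0 := by
  subst hγ
  haveI : Fact p.Prime := ⟨hp⟩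
  -- establish CharP F p
  obtain ⟨p', hc⟩ := CharP.exists F
  haveI := hc
  have hpp' : p'.Prime := CharP.char_is_prime F p'
  obtain ⟨n, -, hcard⟩ := FiniteField.card F p'
  have hdvd : p ∣ p' ^ (n : ℕ) := by
    rw [← hcard, hF, hq, ← pow_mul]
    exact dvd_pow_self p (by omega)
  have hpp : p = p' := ((Nat.prime_dvd_prime_iff_eq hp hpp').mp
    (hp.dvd_of_dvd_pow hdvd))
  subst hpp
  have hq0 : q ≠ 0 := by rw [hq]; exact pow_ne_zero k hp.pos.ne'
  have F6 : ∀ x : F, x ^ q ^ 6 = x := fun x => by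
    rw [← hF]; exact FiniteField.pow_card x
  have fadd : ∀ (n : ℕ) (x y : F), (x + y) ^ q ^ n = x ^ q ^ n + y ^ q ^ n := by
    intro n x y
    rw [hq, ← pow_mul]
    exact add_pow_char_pow ..
  have fsub : ∀ (n : ℕ) (x y : F), (x - y) ^ q ^ n = x ^ q ^ n - y ^ q ^ n := by
    intro n x y
    rw [hq, ← pow_mul]
    exact sub_pow_char_pow ..
  have hred : ∀ (x : F) (m : ℕ), x ^ (m * q ^ 6) = x ^ m := by
    intro x m; rw [pow_mul, F6]
  have g : ∀ i : ℕ, (b + b ^ q) ^ q ^ i = b ^ q ^ i + b ^ q ^ (i + 1) := by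
    intro i
    rw [fadd, ← pow_mul, ← pow_succ']
  have gq : (b + b ^ q) ^ q = b ^ q + b ^ q ^ 2 := by simpa using g 1
  have g2 : (b + b ^ q) ^ q ^ 2 = b ^ q ^ 2 + b ^ q ^ 3 := by simpa using g 2
  intro h
  apply hA
  rw [gq, g2] at h
  have hq3 : q ^ 3 ≠ 0 := pow_ne_zero _ hq0
  have h3 := congrArg (fun x : F => x ^ q ^ 3) h
  simp only [zero_pow hq3] at h3
  simp only [fadd, fsub] at h3
  have r1 : (a ^ (q ^ 5 + 1)) ^ q ^ 3 = a ^ q ^ 2 * a ^ q ^ 3 := by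
    rw [← pow_mul, show (q ^ 5 + 1) * q ^ 3 = q ^ 2 * q ^ 6 + q ^ 3 by ring,
      pow_add, hred]
  have r2 : (a ^ (q ^ 4 + q ^ 3)) ^ q ^ 3 = a ^ q * a := by
    rw [← pow_mul, show (q ^ 4 + q ^ 3) * q ^ 3 = q * q ^ 6 + 1 * q ^ 6 by ring,
      pow_add, hred, hred, pow_one]
  have r3 : (a ^ (q ^ 5 + q ^ 4)) ^ q ^ 3 = a ^ q ^ 2 * a ^ q := by
    rw [← pow_mul, show (q ^ 5 + q ^ 4) * q ^ 3 = q ^ 2 * q ^ 6 + q * q ^ 6 by ring,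
      pow_add, hred, hred]
  have rbb : (b ^ q ^ 3) ^ q ^ 3 = b := by
    rw [← pow_mul, show q ^ 3 * q ^ 3 = 1 * q ^ 6 by ring, hred, pow_one]
  have r4 : (a ^ (q ^ 2 + q)) ^ q ^ 4 = a * a ^ q ^ 5 := by
    rw [← pow_mul, show (q ^ 2 + q) * q ^ 4 = 1 * q ^ 6 + q ^ 5 by ring,
      pow_add, hred, pow_one]
  rw [r1, r2, r3, rbb] at h3
  rw [fsub, fsub, r4]
  linear_combination h3 - h
end

section
/- Let q be a prime power and let a, b ∈ F_{q^2}. Then there exists m ∈ F_{q^2} such that the line Y = m(X - a) + b meets the Hermitian curve X^{q+1} = Y^q + Y in exactly q+1 distinct F_{q^2}-rational points; equivalently, the polynomial X^{q+1} - m^q X^q - m X - m a - m^q a^q - b - b^q has q+1 distinct roots in F_{q^2}. -/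
open scoped Classical
open Polynomial

/-!
With `m = u - a^q`, the polynomial is `(X - m^q)^(q+1) - d` where
`d = u^(q+1) - (a^(q+1) - b - b^q)`, and `d^q = d` because `x ↦ x^q` is an involutive field
automorphism. Choosing `u` so that `d ≠ 0` gives `d^(q-1) = 1`, hence `Y^(q+1) - d` divides
`Y^(q^2) - Y`. Substituting `Y = X - m^q` and using Frobenius, the polynomial divides
`X^(q^2) - X = ∏_{x ∈ F} (X - x)`, so it has as many distinct roots as its degree `q + 1`.
-/

theorem FiniteField.card_roots_toFinset_of_dvd_X_pow_card_sub_X {F : Type*} [Field F] [Fintype F]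
    {f : F[X]} (hf : f ∣ X ^ Fintype.card F - X) : f.roots.toFinset.card = f.natDegree := by
  have hne : (X ^ Fintype.card F - X : F[X]) ≠ 0 :=
    FiniteField.X_pow_card_sub_X_ne_zero F Fintype.one_lt_card
  have hsplits : f.Splits := by
    refine Splits.of_dvd ?_ hne hf
    simpa only [Nat.card_eq_fintype_card] using Polynomial.splits_X_pow_nat_card_sub_X (K := F)
  have hnodup : f.roots.Nodup := by
    refine Multiset.nodup_of_le (roots.le_of_dvd hne hf) ?_
    rw [FiniteField.roots_X_pow_card_sub_X]
    exact Finset.univ.nodup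
  rw [Multiset.toFinset_card_of_nodup hnodup, splits_iff_card_roots.mp hsplits]

theorem sub_dvd_pow_mul_add_one_sub_self {R : Type*} [CommRing R] (y z : R) {e n : ℕ}
    (hz : z ^ n = 1) : y ^ e - z ∣ y ^ (e * n + 1) - y := by
  have key : y ^ (e * n + 1) - y = y * ((y ^ e) ^ n - z ^ n) := by rw [hz]; ring
  rw [key]
  exact dvd_mul_of_dvd_right (sub_dvd_pow_sub_pow _ _ n) y

section

variable {F : Type*} [Field F] [Fintype F] {p k q : ℕ} [Fact p.Prime] [CharP F p]

theorem pow_sq_eq_self_of_card_eq_sq (hF : Fintype.card F = q ^ 2) (x : F) : x ^ q ^ 2 = x :=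
  hF ▸ FiniteField.pow_card x

theorem card_roots_X_sub_C_pow_succ_sub_C (hq : q = p ^ k) (hF : Fintype.card F = q ^ 2)
    (c : F) {d : F} (hd : d ≠ 0) (hdq : d ^ q = d) :
    ((X - C c) ^ (q + 1) - C d).roots.toFinset.card = q + 1 := by
  obtain ⟨r, rfl⟩ : ∃ r, q = r + 1 :=
    Nat.exists_eq_add_one.mpr (hq ▸ pow_pos (Fact.out : p.Prime).pos k)
  have hd1 : d ^ r = 1 := by
    rw [pow_succ] at hdq
    exact (mul_eq_right₀ hd).mp hdq
  have hfrob : (X - C c : F[X]) ^ Fintype.card F = X ^ Fintype.card F - C c := by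
    have hcard : Fintype.card F = p ^ (k * 2) := by rw [hF, hq, pow_mul]
    rw [hcard, sub_pow_char_pow, ← C_pow, ← hcard, FiniteField.pow_card]
  have hdvd : (X - C c) ^ (r + 1 + 1) - C d ∣ X ^ Fintype.card F - X := by
    have := sub_dvd_pow_mul_add_one_sub_self (X - C c) (C d) (e := r + 1 + 1)
      (by rw [← C_pow, hd1, C_1])
    rwa [show (r + 1 + 1) * r + 1 = Fintype.card F by rw [hF]; ring, hfrob,
      sub_sub_sub_cancel_right] at this
  rw [FiniteField.card_roots_toFinset_of_dvd_X_pow_card_sub_X hdvd, natDegree_sub_C,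
    natDegree_pow, natDegree_X_sub_C, mul_one]

theorem X_pow_succ_sub_eq_X_sub_C_pow_succ_sub_C (hq : q = p ^ k) (hF : Fintype.card F = q ^ 2)
    (m a b : F) :
    (X ^ (q + 1) - C (m ^ q) * X ^ q - C m * X - C (m * a) - C (m ^ q * a ^ q) - C b - C (b ^ q)
      : F[X]) = (X - C (m ^ q)) ^ (q + 1) - C (m ^ (q + 1) + m * a + m ^ q * a ^ q + b + b ^ q) := by
  have hfrob : (X - C (m ^ q) : F[X]) ^ q = X ^ q - C m := by
    rw [hq, sub_pow_char_pow, ← C_pow, ← hq, ← pow_mul, ← sq, pow_sq_eq_self_of_card_eq_sq hF]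
  rw [pow_succ (X - C (m ^ q)), hfrob]
  simp only [map_add, map_mul, map_pow]
  ring

/- `x ^ (q + 1)` and `x + x ^ q` are the norm and trace of `F` over its subfield of order `q`. -/
theorem norm_add_trace_of_sub_conj (hq : q = p ^ k) (hF : Fintype.card F = q ^ 2) (u a b : F) :
    (u - a ^ q) ^ (q + 1) + (u - a ^ q) * a + (u - a ^ q) ^ q * a ^ q + b + b ^ q
      = u ^ (q + 1) - (a ^ (q + 1) - (b + b ^ q)) := by
  have hfrob : (u - a ^ q) ^ q = u ^ q - a := by
    rw [hq, sub_pow_char_pow, ← hq, ← pow_mul, ← sq, pow_sq_eq_self_of_card_eq_sq hF]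
  rw [pow_succ, hfrob]
  ring

theorem norm_sub_norm_sub_trace_pow_eq_self (hq : q = p ^ k) (hF : Fintype.card F = q ^ 2)
    (u a b : F) :
    (u ^ (q + 1) - (a ^ (q + 1) - (b + b ^ q))) ^ q = u ^ (q + 1) - (a ^ (q + 1) - (b + b ^ q)) := by
  have hconj : ∀ x : F, (x ^ q) ^ q = x := fun x ↦ by
    rw [← pow_mul, ← sq, pow_sq_eq_self_of_card_eq_sq hF]
  have hnorm : ∀ x : F, (x ^ (q + 1)) ^ q = x ^ (q + 1) := fun x ↦ by
    rw [pow_succ, mul_pow, hconj, mul_comm]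
  subst hq
  rw [sub_pow_char_pow, sub_pow_char_pow, add_pow_char_pow, hnorm, hnorm, hconj, add_comm b]

end

theorem stmt11_general (p k q : ℕ) (hp : p.Prime) (hq : q = p ^ k)
    (F : Type*) [Field F] [Fintype F] (hF : Fintype.card F = q ^ 2)
    (a b : F) :
    ∃ m : F,
      (X ^ (q + 1) - C (m ^ q) * X ^ q - C m * X
        - C (m * a) - C (m ^ q * a ^ q) - C b - C (b ^ q) : F[X]).roots.toFinset.card
        = q + 1 := by
  have : Fact p.Prime := ⟨hp⟩
  have : CharP F p := charP_of_card_eq_prime_pow (hF.trans (by rw [hq, ← pow_mul]))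
  obtain ⟨u, hu⟩ : ∃ u : F, u ^ (q + 1) ≠ a ^ (q + 1) - (b + b ^ q) := by
    by_cases hc : a ^ (q + 1) - (b + b ^ q) = 0
    · exact ⟨1, by simp [hc]⟩
    · exact ⟨0, by simpa using Ne.symm hc⟩
  refine ⟨u - a ^ q, ?_⟩
  rw [X_pow_succ_sub_eq_X_sub_C_pow_succ_sub_C hq hF, norm_add_trace_of_sub_conj hq hF]
  exact card_roots_X_sub_C_pow_succ_sub_C hq hF _ (sub_ne_zero.mpr hu)
    (norm_sub_norm_sub_trace_pow_eq_self hq hF u a b)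

theorem stmt11 (p k q : ℕ) (hp : p.Prime) (hk : 0 < k) (hq : q = p ^ k)
    (F : Type*) [Field F] [Fintype F] (hF : Fintype.card F = q ^ 2)
    (a b : F) :
    ∃ m : F,
      (X ^ (q + 1) - C (m ^ q) * X ^ q - C m * X
        - C (m * a) - C (m ^ q * a ^ q) - C b - C (b ^ q) : F[X]).roots.toFinset.card
        = q + 1 :=
  stmt11_general p k q hp hq F hF a b
end

section
/- Let q be a prime power. The number of F_{q^6}-rational points of the Hermitian curve H_q with affine equation X^{q+1} = Y^q + Y, including its single point at infinity, equals q^6 + 1 + q(q-1)q^3. -/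
/-!
Let `σ` be the `q`-Frobenius of `F = 𝔽_{q⁶}`, viewed as an additive endomorphism. For monic
`P ∈ ℤ[X]` the kernel of `P(σ)` consists of roots of the `q`-linearized polynomial of `P`, so it
has at most `q ^ deg P` elements; when `Q * P = X⁶ - 1` the bounds for `P` and `Q` multiply to `|F|`,
which forces `|ker P(σ)| = q ^ deg P` and `im P(σ) = ker Q(σ)`. For `P = X + 1` this says that
`y^q + y = c` has `q` solutions when `M(c) = 0` and none otherwise, where
`M = X⁵ - X⁴ + X³ - X² + X - 1` is evaluated at `σ`.

Pick `θ ∈ 𝔽_{q²} \ 𝔽_q` and write `x = a + θ b` with `a, b ∈ 𝔽_{q³}`. Then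
`M(x^{q+1}) = (θ^q - θ) · T(a (b^{q²} - b^q))`, where `T = 1 + σ + σ²` is the trace to `𝔽_q`.
For the `q` values `b ∈ 𝔽_q` every `a` qualifies; for the other `q³ - q` values the condition is a
nontrivial linear condition on `a` with `q²` solutions.
-/

open Polynomial Finset LinearMap

theorem LinearMap.card_ker_eq_and_range_eq_ker_of_card_le {R M N P : Type*} [Ring R]
    [AddCommGroup M] [AddCommGroup N] [AddCommGroup P] [Module R M] [Module R N] [Module R P]
    [Finite M] [Finite N] {f : M →ₗ[R] N} {g : N →ₗ[R] P} (hgf : g ∘ₗ f = 0) {a b : ℕ}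
    (hf : Nat.card (ker f) ≤ a) (hg : Nat.card (ker g) ≤ b) (hM : Nat.card M = a * b) :
    Nat.card (ker f) = a ∧ range f = ker g := by
  have hle : (range f).toAddSubgroup ≤ (ker g).toAddSubgroup := range_le_ker_iff.2 hgf
  have hmul : Nat.card (ker f) * Nat.card (range f) = a * b := by
    rw [← hM, ← f.toAddMonoidHom.ker.card_mul_index, AddSubgroup.index_ker, ← ker_toAddSubgroup,
      ← range_toAddSubgroup]
    rfl
  have hr : Nat.card (range f) ≤ b := (AddSubgroup.card_le_of_le hle).trans hg
  have hpos : 0 < a * b := hM ▸ Nat.card_pos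
  have hka : Nat.card (ker f) = a := by
    by_contra h
    have := Nat.mul_lt_mul_of_lt_of_le (lt_of_le_of_ne hf h) hr (Nat.pos_of_mul_pos_left hpos)
    omega
  refine ⟨hka, Submodule.toAddSubgroup_injective (AddSubgroup.eq_of_le_of_card_ge hle ?_)⟩
  exact hg.trans (Nat.eq_of_mul_eq_mul_left (Nat.pos_of_mul_pos_right hpos) (hka ▸ hmul)).ge

theorem pow_pow_eq_pow_pow_mod {M : Type*} [Monoid M] {x : M} {q m : ℕ} (h : x ^ q ^ m = x)
    (n : ℕ) : x ^ q ^ n = x ^ q ^ (n % m) := by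
  have hmul : ∀ j, x ^ q ^ (m * j) = x := by
    intro j
    induction j with
    | zero => simp
    | succ j ih => rw [Nat.mul_succ, pow_add, pow_mul, ih, h]
  conv_lhs => rw [← Nat.div_add_mod n m, pow_add, pow_mul, hmul]

section CommRing

variable {R : Type*} [CommRing R] {q : ℕ} {σ : Module.End ℤ R}

theorem pow_apply_eq_pow_pow (hσ : ∀ x, σ x = x ^ q) (i : ℕ) (x : R) :
    (σ ^ i) x = x ^ q ^ i := by
  induction i with
  | zero => simp
  | succ i ih => rw [pow_succ', Module.End.mul_apply, ih, hσ, ← pow_mul, ← pow_succ]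

theorem sub_pow_pow (hσ : ∀ x, σ x = x ^ q) (i : ℕ) (x y : R) :
    (x - y) ^ q ^ i = x ^ q ^ i - y ^ q ^ i := by
  simp only [← pow_apply_eq_pow_pow hσ, map_sub]

variable (R) in
noncomputable def linearizedPolynomial (q : ℕ) (P : ℤ[X]) : R[X] :=
  ∑ i ∈ range (P.natDegree + 1), C (P.coeff i : R) * X ^ q ^ i

theorem aeval_apply_eq_eval_linearizedPolynomial (hσ : ∀ x, σ x = x ^ q) (P : ℤ[X]) (x : R) :
    aeval σ P x = (linearizedPolynomial R q P).eval x := by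
  simp [aeval_eq_sum_range, linearizedPolynomial, eval_finsetSum, pow_apply_eq_pow_pow hσ,
    zsmul_eq_mul]

theorem degree_linearizedPolynomial [Nontrivial R] (hq : 2 ≤ q) {P : ℤ[X]} (hP : P.Monic) :
    (linearizedPolynomial R q P).degree = ((q ^ P.natDegree : ℕ) : WithBot ℕ) := by
  have hlow : (∑ i ∈ range P.natDegree, C (P.coeff i : R) * X ^ q ^ i).degree
      < ((q ^ P.natDegree : ℕ) : WithBot ℕ) := by
    refine (degree_sum_le _ _).trans_lt
      ((Finset.sup_lt_iff (WithBot.bot_lt_coe _)).2 fun i hi => ?_)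
    refine (degree_C_mul_X_pow_le _ _).trans_lt ?_
    exact_mod_cast Nat.pow_lt_pow_right hq (mem_range.1 hi)
  rw [linearizedPolynomial, sum_range_succ, hP.coeff_natDegree, Int.cast_one, C_1, one_mul,
    degree_add_eq_right_of_degree_lt (by rwa [degree_X_pow]), degree_X_pow]

theorem card_ker_aeval_le [IsDomain R] (hσ : ∀ x, σ x = x ^ q) (hq : 2 ≤ q) {P : ℤ[X]}
    (hP : P.Monic) : Nat.card (ker (aeval σ P)) ≤ q ^ P.natDegree := by
  classical
  set L := linearizedPolynomial R q P
  have hL : L ≠ 0 := fun h => by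
    rw [← degree_eq_bot, degree_linearizedPolynomial hq hP] at h
    exact WithBot.coe_ne_bot h
  have hsub : (ker (aeval σ P) : Set R) ⊆ (L.roots.toFinset : Set R) := fun x hx => by
    simpa [mem_roots hL, aeval_apply_eq_eval_linearizedPolynomial hσ] using hx
  calc Nat.card (ker (aeval σ P)) ≤ Nat.card (L.roots.toFinset : Set R) :=
        Nat.card_mono (Finset.finite_toSet _) hsub
    _ ≤ L.natDegree := by
        rw [Nat.card_coe_set_eq, Set.ncard_coe_finset]
        exact L.roots.toFinset_card_le.trans L.card_roots'
    _ = q ^ P.natDegree := natDegree_eq_of_degree_eq_some (degree_linearizedPolynomial hq hP)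

theorem aeval_X_add_one_apply (hσ : ∀ x, σ x = x ^ q) (x : R) :
    aeval σ (X + 1 : ℤ[X]) x = x ^ q + x := by
  simp [hσ]

theorem aeval_trace_apply (hσ : ∀ x, σ x = x ^ q) (x : R) :
    aeval σ (X ^ 2 + X + 1 : ℤ[X]) x = x ^ q ^ 2 + x ^ q + x := by
  simp [pow_apply_eq_pow_pow hσ, hσ]

theorem aeval_alternating_apply (hσ : ∀ x, σ x = x ^ q) (x : R) :
    aeval σ (X ^ 5 - X ^ 4 + X ^ 3 - X ^ 2 + X - 1 : ℤ[X]) x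
      = x ^ q ^ 5 - x ^ q ^ 4 + x ^ q ^ 3 - x ^ q ^ 2 + x ^ q - x := by
  simp [pow_apply_eq_pow_pow hσ, hσ]

theorem aeval_alternating_mul (hσ : ∀ x, σ x = x ^ q) {η d : R} (hη : η ^ q ^ 2 = η)
    (hd : d ^ q ^ 3 = d) :
    aeval σ (X ^ 5 - X ^ 4 + X ^ 3 - X ^ 2 + X - 1 : ℤ[X]) (η * d)
      = (η ^ q - η) * aeval σ (X ^ 2 + X + 1 : ℤ[X]) d := by
  rw [aeval_alternating_apply hσ, aeval_trace_apply hσ]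
  simp only [mul_pow]
  rw [pow_pow_eq_pow_pow_mod hη 5, pow_pow_eq_pow_pow_mod hη 4, pow_pow_eq_pow_pow_mod hη 3,
    pow_pow_eq_pow_pow_mod hd 5, pow_pow_eq_pow_pow_mod hd 4, hη, hd]
  norm_num
  ring

theorem aeval_trace_pow_mul (hσ : ∀ x, σ x = x ^ q) {a b : R} (ha : a ^ q ^ 3 = a)
    (hb : b ^ q ^ 3 = b) :
    aeval σ (X ^ 2 + X + 1 : ℤ[X]) (a ^ q * b)
      = aeval σ (X ^ 2 + X + 1 : ℤ[X]) (a * b ^ q ^ 2) := by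
  have hb4 : b ^ q ^ 4 = b ^ q := by simpa using pow_pow_eq_pow_pow_mod hb 4
  rw [aeval_trace_apply hσ, aeval_trace_apply hσ]
  linear_combination b ^ q ^ 2 * ha - a ^ q * hb - a ^ q ^ 2 * hb4

theorem aeval_alternating_add_mul_pow_succ (hσ : ∀ x, σ x = x ^ q) {a b θ : R}
    (ha : a ^ q ^ 3 = a) (hb : b ^ q ^ 3 = b) (hθ : θ ^ q ^ 2 = θ) :
    aeval σ (X ^ 5 - X ^ 4 + X ^ 3 - X ^ 2 + X - 1 : ℤ[X]) ((a + θ * b) ^ (q + 1))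
      = (θ ^ q - θ) * aeval σ (X ^ 2 + X + 1 : ℤ[X]) (a * (b ^ q ^ 2 - b ^ q)) := by
  have haq : (a ^ q) ^ q ^ 3 = a ^ q := by rw [pow_right_comm, ha]
  have hbq : (b ^ q) ^ q ^ 3 = b ^ q := by rw [pow_right_comm, hb]
  have hθq : (θ ^ q) ^ q ^ 2 = θ ^ q := by rw [pow_right_comm, hθ]
  -- every summand has the shape `η * d` with `η ^ q ^ 2 = η` and `d ^ q ^ 3 = d`
  have hexp : (a + θ * b) ^ (q + 1) = 1 * (a ^ q * a) + θ ^ q * (a * b ^ q)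
      + θ * (a ^ q * b) + (θ ^ q * θ) * (b ^ q * b) := by
    rw [pow_succ, ← hσ, map_add, hσ, hσ, mul_pow]
    ring
  rw [hexp, map_add, map_add, map_add,
    aeval_alternating_mul hσ (one_pow _) (by rw [mul_pow, haq, ha]),
    aeval_alternating_mul hσ hθq (by rw [mul_pow, ha, hbq]),
    aeval_alternating_mul hσ hθ (by rw [mul_pow, haq, hb]),
    aeval_alternating_mul hσ (by rw [mul_pow, hθq, hθ]) (by rw [mul_pow, hbq, hb]),
    aeval_trace_pow_mul hσ ha hb, mul_sub, map_sub]
  linear_combination (aeval σ (X ^ 2 + X + 1 : ℤ[X]) (a * b ^ q)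
    + θ ^ q * aeval σ (X ^ 2 + X + 1 : ℤ[X]) (b ^ q * b)) * hθ

theorem pow_pow_three_eq_self_of_aeval_trace_eq_zero (hσ : ∀ x, σ x = x ^ q) {z : R}
    (hz : aeval σ (X ^ 2 + X + 1 : ℤ[X]) z = 0) : z ^ q ^ 3 = z := by
  have h := congrArg σ hz
  rw [aeval_trace_apply hσ] at hz h
  rw [map_add, map_add, hσ, hσ, hσ, map_zero] at h
  linear_combination h - hz

end CommRing

section Field

variable {F : Type*} [Field F] {q : ℕ} {σ : Module.End ℤ F}

theorem injOn_add_mul (hσ : ∀ x, σ x = x ^ q) {θ : F} (hθ2 : θ ^ q ^ 2 = θ) (hθ1 : θ ^ q ≠ θ) :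
    Set.InjOn (fun ab : F × F => ab.1 + θ * ab.2)
      {ab | ab.1 ^ q ^ 3 = ab.1 ∧ ab.2 ^ q ^ 3 = ab.2} := by
  rintro ⟨a, b⟩ ⟨ha, hb⟩ ⟨a', b'⟩ ⟨ha', hb'⟩ h
  simp only at ha hb ha' hb' h
  obtain rfl : b = b' := by
    by_contra hne
    have hθ : θ = (a' - a) / (b - b') := by
      rw [eq_div_iff (sub_ne_zero.2 hne)]
      linear_combination h
    refine hθ1 ?_
    calc θ ^ q = θ ^ q ^ 3 := by rw [pow_pow_eq_pow_pow_mod hθ2 3, pow_one]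
      _ = θ := by rw [hθ, div_pow, sub_pow_pow hσ, sub_pow_pow hσ, ha, ha', hb, hb']
  obtain rfl : a = a' := by simpa using h
  rfl

variable [Fintype F] [DecidableEq F]

theorem card_aeval_eq_zero_and_exists_aeval_eq_iff {n : ℕ} (hF : Fintype.card F = q ^ n)
    (hσ : ∀ x, σ x = x ^ q) (hq : 2 ≤ q) {P Q : ℤ[X]} (hP : P.Monic) (hQ : Q.Monic)
    (hQP : Q * P = X ^ n - 1) :
    #{x | aeval σ P x = 0} = q ^ P.natDegree ∧
      ∀ c, (∃ y, aeval σ P y = c) ↔ aeval σ Q c = 0 := by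
  have hσn : aeval σ (X ^ n - 1 : ℤ[X]) = 0 := by
    ext x
    simp [pow_apply_eq_pow_pow hσ, ← hF, FiniteField.pow_card]
  have hdeg : Q.natDegree + P.natDegree = n := by
    rw [← hQ.natDegree_mul hP, hQP, ← C_1, natDegree_X_pow_sub_C]
  obtain ⟨hker, hrange⟩ := card_ker_eq_and_range_eq_ker_of_card_le
    (f := aeval σ P) (g := aeval σ Q) (by rw [← Module.End.mul_eq_comp, ← map_mul, hQP, hσn])
    (card_ker_aeval_le hσ hq hP) (card_ker_aeval_le hσ hq hQ)
    (by rw [Nat.card_eq_fintype_card, hF, ← hdeg, pow_add, mul_comm])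
  refine ⟨?_, fun c => by rw [← LinearMap.mem_range, hrange, mem_ker]⟩
  rw [← hker, ← Fintype.card_subtype, ← Nat.card_eq_fintype_card]
  rfl

theorem card_pow_pow_eq_self {n m : ℕ} (hF : Fintype.card F = q ^ n) (hσ : ∀ x, σ x = x ^ q)
    (hq : 2 ≤ q) (hm : m ∣ n) (hm0 : m ≠ 0) : #{x : F | x ^ q ^ m = x} = q ^ m := by
  obtain ⟨d, rfl⟩ := hm
  have hd : d ≠ 0 := by
    rintro rfl
    simpa [hF] using Fintype.one_lt_card (α := F)
  have hgeom : (∑ i ∈ range d, (X ^ m : ℤ[X]) ^ i) * (X ^ m - 1) = X ^ (m * d) - 1 := by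
    rw [geom_sum_mul, pow_mul]
  have h := (card_aeval_eq_zero_and_exists_aeval_eq_iff hF hσ hq (monic_X_pow_sub_C 1 hm0)
    ((monic_X_pow m).geom_sum (by simpa using Nat.pos_of_ne_zero hm0) hd) hgeom).1
  rw [natDegree_X_pow_sub_C, C_1] at h
  simpa [pow_apply_eq_pow_pow hσ, sub_eq_zero] using h

theorem exists_pow_pow_two_eq_and_pow_ne (hq : 2 ≤ q) (hF1 : #{x : F | x ^ q = x} = q)
    (hF2 : #{x : F | x ^ q ^ 2 = x} = q ^ 2) : ∃ θ : F, θ ^ q ^ 2 = θ ∧ θ ^ q ≠ θ := by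
  by_contra! h
  have := card_le_card (s := ({x : F | x ^ q ^ 2 = x} : Finset F)) (t := {x : F | x ^ q = x})
    fun x hx => by simp_all
  rw [hF1, hF2] at this
  nlinarith

theorem card_pow_add_self_eq (hF : Fintype.card F = q ^ 6) (hσ : ∀ x, σ x = x ^ q)
    (hq : 2 ≤ q) (c : F) :
    #{y : F | y ^ q + y = c} =
      if aeval σ (X ^ 5 - X ^ 4 + X ^ 3 - X ^ 2 + X - 1 : ℤ[X]) c = 0 then q else 0 := by
  obtain ⟨hker, hrange⟩ := card_aeval_eq_zero_and_exists_aeval_eq_iff hF hσ hq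
    (P := X + 1) (Q := X ^ 5 - X ^ 4 + X ^ 3 - X ^ 2 + X - 1) (by monicity!) (by monicity!)
    (by ring)
  simp only [← aeval_X_add_one_apply hσ]
  split_ifs with hc
  · obtain ⟨y, hy⟩ := (hrange c).2 hc
    rw [AddMonoidHom.card_fiber_eq_of_mem_range (aeval σ (X + 1 : ℤ[X])) ⟨y, hy⟩ ⟨0, map_zero _⟩,
      hker, show (X + 1 : ℤ[X]).natDegree = 1 by compute_degree!, pow_one]
  · rw [card_eq_zero, filter_eq_empty_iff]
    exact fun y _ hy => hc ((hrange c).1 ⟨y, hy⟩)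

theorem card_alternating_pow_succ_eq_zero (hF : Fintype.card F = q ^ 6) (hσ : ∀ x, σ x = x ^ q)
    {θ : F} (hθ2 : θ ^ q ^ 2 = θ) (hθ1 : θ ^ q ≠ θ) (hE : #{x : F | x ^ q ^ 3 = x} = q ^ 3) :
    #{x : F | aeval σ (X ^ 5 - X ^ 4 + X ^ 3 - X ^ 2 + X - 1 : ℤ[X]) (x ^ (q + 1)) = 0}
      = ∑ b ∈ {x : F | x ^ q ^ 3 = x}, #{a ∈ {x : F | x ^ q ^ 3 = x} |
          aeval σ (X ^ 2 + X + 1 : ℤ[X]) (a * (b ^ q ^ 2 - b ^ q)) = 0} := by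
  set E : Finset F := {x | x ^ q ^ 3 = x}
  have hinj : Set.InjOn (fun ab : F × F => ab.1 + θ * ab.2) ↑(E ×ˢ E) :=
    (injOn_add_mul hσ hθ2 hθ1).mono fun ab hab => by simpa [E] using hab
  have himage : (E ×ˢ E).image (fun ab : F × F => ab.1 + θ * ab.2) = univ :=
    eq_univ_of_card _ (by rw [card_image_of_injOn hinj, card_product, hE, hF]; ring)
  rw [← himage, filter_image, card_image_of_injOn (hinj.mono (filter_subset _ _)),
    card_filter, sum_product_right]
  refine sum_congr rfl fun b hb => ?_
  rw [card_filter]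
  refine sum_congr rfl fun a ha => ?_
  simp only [E, mem_filter, mem_univ, true_and] at ha hb
  simp only [aeval_alternating_add_mul_pow_succ hσ ha hb hθ2, mul_eq_zero,
    sub_ne_zero.2 hθ1, false_or]

theorem card_aeval_trace_mul_eq (hσ : ∀ x, σ x = x ^ q) {c : F} (hc : c ^ q ^ 3 = c)
    (hc0 : c ≠ 0) :
    #{a ∈ {x : F | x ^ q ^ 3 = x} | aeval σ (X ^ 2 + X + 1 : ℤ[X]) (a * c) = 0}
      = #{z : F | aeval σ (X ^ 2 + X + 1 : ℤ[X]) z = 0} := by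
  apply card_nbij' (· * c) (· * c⁻¹)
  · intro a ha
    simp only [coe_filter, mem_filter, mem_univ, true_and, Set.mem_ofPred_eq] at ha ⊢
    exact ha.2
  · intro z hz
    simp only [coe_filter, mem_filter, mem_univ, true_and, Set.mem_ofPred_eq] at hz ⊢
    refine ⟨?_, by rwa [inv_mul_cancel_right₀ hc0]⟩
    rw [mul_pow, inv_pow, hc, pow_pow_three_eq_self_of_aeval_trace_eq_zero hσ hz]
  · intro a _
    simp [hc0]
  · intro z _
    simp [hc0]

theorem sum_card_aeval_trace_mul_eq (hσ : ∀ x, σ x = x ^ q)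
    (hE3 : #{x : F | x ^ q ^ 3 = x} = q ^ 3) (hE1 : #{x : F | x ^ q = x} = q)
    (hT : #{z : F | aeval σ (X ^ 2 + X + 1 : ℤ[X]) z = 0} = q ^ 2) :
    ∑ b ∈ {x : F | x ^ q ^ 3 = x}, #{a ∈ {x : F | x ^ q ^ 3 = x} |
        aeval σ (X ^ 2 + X + 1 : ℤ[X]) (a * (b ^ q ^ 2 - b ^ q)) = 0}
      = q * q ^ 3 + (q ^ 3 - q) * q ^ 2 := by
  set E : Finset F := {x | x ^ q ^ 3 = x}
  have hterm : ∀ b ∈ E, #{a ∈ E | aeval σ (X ^ 2 + X + 1 : ℤ[X]) (a * (b ^ q ^ 2 - b ^ q)) = 0}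
      = if b ^ q = b then q ^ 3 else q ^ 2 := by
    intro b hb
    simp only [E, mem_filter, mem_univ, true_and] at hb
    split_ifs with h1
    · have hc : b ^ q ^ 2 - b ^ q = 0 := by rw [sq, pow_mul, h1, h1, sub_self]
      simpa [hc] using hE3
    · have hc : (b ^ q - b) ^ q = b ^ q ^ 2 - b ^ q := by
        rw [← hσ (b ^ q - b), map_sub, hσ, hσ, ← pow_mul, ← sq]
      rw [card_aeval_trace_mul_eq hσ
        (by rw [sub_pow_pow hσ, pow_right_comm, hb, pow_right_comm, hb])
        (hc ▸ pow_ne_zero _ (sub_ne_zero.2 h1)), hT]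
  have hE1' : #{b ∈ E | b ^ q = b} = q := by
    refine Eq.trans (congrArg card ?_) hE1
    rw [filter_filter]
    refine filter_congr fun b _ => ⟨And.right, fun h => ⟨?_, h⟩⟩
    rw [pow_pow_eq_pow_pow_mod (m := 1) (by rwa [pow_one]) 3, Nat.mod_one, pow_zero, pow_one]
  have hsplit := card_filter_add_card_filter_not (s := E) (fun b => b ^ q = b)
  rw [hE1', hE3] at hsplit
  rw [sum_congr rfl hterm, sum_ite, sum_const, sum_const, smul_eq_mul, smul_eq_mul, hE1',
    show #{b ∈ E | ¬b ^ q = b} = q ^ 3 - q by omega]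

theorem card_hermitian_affine (hF : Fintype.card F = q ^ 6) (hσ : ∀ x, σ x = x ^ q)
    (hq : 2 ≤ q) :
    Nat.card {P : F × F // P.1 ^ (q + 1) = P.2 ^ q + P.2}
      = q * (q * q ^ 3 + (q ^ 3 - q) * q ^ 2) := by
  have hE1 : #{x : F | x ^ q = x} = q := by
    simpa using card_pow_pow_eq_self hF hσ hq (m := 1) (one_dvd 6) one_ne_zero
  obtain ⟨θ, hθ2, hθ1⟩ := exists_pow_pow_two_eq_and_pow_ne hq hE1
    (card_pow_pow_eq_self hF hσ hq (by norm_num) two_ne_zero)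
  have hE3 := card_pow_pow_eq_self hF hσ hq (m := 3) (by norm_num) three_ne_zero
  have hT := (card_aeval_eq_zero_and_exists_aeval_eq_iff hF hσ hq (P := X ^ 2 + X + 1)
    (Q := X ^ 4 - X ^ 3 + X - 1) (by monicity!) (by monicity!) (by ring)).1
  rw [show (X ^ 2 + X + 1 : ℤ[X]).natDegree = 2 by compute_degree!] at hT
  calc Nat.card {P : F × F // P.1 ^ (q + 1) = P.2 ^ q + P.2}
      = ∑ x : F, #{y : F | y ^ q + y = x ^ (q + 1)} := by
        rw [Nat.card_congr (Equiv.subtypeProdEquivSigmaSubtype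
          fun (x y : F) => x ^ (q + 1) = y ^ q + y), Nat.card_sigma]
        simp [Nat.card_eq_fintype_card, Fintype.card_subtype, eq_comm]
    _ = ∑ x : F, if aeval σ (X ^ 5 - X ^ 4 + X ^ 3 - X ^ 2 + X - 1 : ℤ[X]) (x ^ (q + 1)) = 0
          then q else 0 := sum_congr rfl fun x _ => card_pow_add_self_eq hF hσ hq _
    _ = q * (q * q ^ 3 + (q ^ 3 - q) * q ^ 2) := by
        rw [sum_ite, sum_const_zero, add_zero, sum_const, smul_eq_mul, mul_comm,
          card_alternating_pow_succ_eq_zero hF hσ hθ2 hθ1 hE3,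
          sum_card_aeval_trace_mul_eq hσ hE3 hE1 hT]

end Field

theorem stmt12 (p k q : ℕ) (hp : p.Prime) (hk : 0 < k) (hq : q = p ^ k)
    (F : Type*) [Field F] [Fintype F] (hF : Fintype.card F = q ^ 6) :
    Nat.card {P : F × F // P.1 ^ (q + 1) = P.2 ^ q + P.2} + 1
      = q ^ 6 + 1 + q * (q - 1) * q ^ 3 := by
  classical
  subst hq
  have : Fact p.Prime := ⟨hp⟩
  have : CharP F p := charP_of_card_eq_prime_pow (hF.trans (pow_mul p k 6).symm)
  have hq : 2 ≤ p ^ k := hp.two_le.trans (Nat.le_self_pow hk.ne' p)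
  have hq3 : p ^ k ≤ (p ^ k) ^ 3 := Nat.le_self_pow three_ne_zero _
  rw [card_hermitian_affine (σ := (iterateFrobenius F p k).toAddMonoidHom.toIntLinearMap) hF
    (iterateFrobenius_def p k) hq]
  zify [hq3, hq.trans' one_le_two]
  ring
end

section
/- Let q be a prime power, m ∈ F_{q^2}, and a, b ∈ F_{q^6} with (a, b) ∉ AG(2, F_{q^2}) (that is, not both a and b in F_{q^2}). If m^{q+1} + m^q a^q + m a + b^q + b = 0, then m = -(b^{q^2} - b)/(a^{q^2} - a); in particular a ∉ F_{q^2}. -/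
theorem stmt15 (p k q : ℕ) (hp : p.Prime) (hk : 0 < k) (hq : q = p ^ k)
    (F : Type*) [Field F] [Fintype F] (hF : Fintype.card F = q ^ 6)
    (m a b : F) (hm : m ^ q ^ 2 = m)
    (hab : ¬ (a ^ q ^ 2 = a ∧ b ^ q ^ 2 = b))
    (h : m ^ (q + 1) + m ^ q * a ^ q + m * a + b ^ q + b = 0) :
    a ^ q ^ 2 ≠ a ∧ m = -((b ^ q ^ 2 - b) / (a ^ q ^ 2 - a)) := by
  haveI : Fact p.Prime := ⟨hp⟩
  have hq0 : q ≠ 0 := by subst hq; exact pow_ne_zero _ hp.ne_zero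
  have hpF : (p : F) = 0 := by
    have h0 : ((Fintype.card F : ℕ) : F) = 0 := Nat.cast_card_eq_zero F
    rw [hF, hq] at h0
    have : ((p : F)) ^ (k * 6) ≠ 0 → False := by
      intro hne; exact hne (by push_cast at h0 ⊢; rw [← pow_mul] at h0; exact_mod_cast h0)
    by_contra hne
    exact this (pow_ne_zero _ hne)
  haveI hchar : CharP F p := (CharP.charP_iff_prime_eq_zero hp).2 hpF
  have hadd : ∀ x y : F, (x + y) ^ q = x ^ q + y ^ q := by
    intro x y; rw [hq]; exact add_pow_char_pow ..
  -- apply Frobenius to h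
  have h1 : (m ^ (q + 1) + m ^ q * a ^ q + m * a + b ^ q + b) ^ q = 0 := by
    rw [h, zero_pow hq0]
  simp only [hadd, mul_pow, ← pow_mul] at h1
  have hmq : m ^ (q * q) = m := by rw [← pow_two q]; exact hm
  have hqq : a ^ (q * q) = a ^ q ^ 2 := by rw [pow_two q]
  have hbq : b ^ (q * q) = b ^ q ^ 2 := by rw [pow_two q]
  have hm1 : m ^ ((q + 1) * q) = m ^ (q + 1) := by
    rw [add_mul, one_mul, pow_add, pow_add, pow_one, hmq, mul_comm]
  rw [hm1, hmq, hqq, hbq] at h1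
  -- subtract h
  have hX : m * (a ^ q ^ 2 - a) + (b ^ q ^ 2 - b) = 0 := by
    have := sub_eq_zero.mpr (h1.trans h.symm)
    ring_nf at this ⊢
    linear_combination this
  have hane : a ^ q ^ 2 ≠ a := by
    intro ha
    apply hab
    refine ⟨ha, ?_⟩
    have hb0 : b ^ q ^ 2 - b = 0 := by rw [ha] at hX; simpa using hX
    exact sub_eq_zero.mp hb0
  refine ⟨hane, ?_⟩
  have hne : a ^ q ^ 2 - a ≠ 0 := sub_ne_zero.mpr hane
  field_simp
  linear_combination hX
end

section
/- Let q be a prime power, a ∈ F_{q^6} \ F_{q^2}, and b ∈ F_{q^6}. Suppose A := Tr_{q^2}^{q^6}(a^{q+1} - a^{q^2+q}) = 0. Then the polynomial g_2(m) = m^q (a - a^{q^2})^{q+1} + m (a - a^{q^2})(a - a^{q^4}) + c, where c is a fixed constant in F_{q^6} depending on a and b, viewed as a q-linearized-affine equation in m, has exactly q solutions m in F_{q^2} provided it has at least one, since the associated homogeneous map m ↦ m^q (a - a^{q^2})^{q+1} + m (a - a^{q^2})(a - a^{q^4}) restricted to F_{q^2} has kernel of size q. -/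
/-!
Put `d = a - a^{q^2}`, so that `α = d^{q+1}` and, since `a^{q^6} = a`, `β = -d · d^{q^4}`.
The element `m₀ = d^{q^3+q^2+q}` is then a nonzero root of `m ↦ m^q α + m β`, and the
hypothesis `A = 0` is exactly the relation `d^{q^4+q^3} = d^{q+1}`, which makes `m₀` lie in
`F_{q^2}`. Two roots of `m ↦ m^q α + m β` have a quotient fixed by `x ↦ x^q`, so the
solutions in `F_{q^2}` of the affine equation form a coset `m₁ + F_q m₀`, which has `q`
elements.
-/

open Polynomial

theorem FiniteField.natCard_pow_eq_self_of_card_eq_pow {K : Type*} [Field K] [Fintype K]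
    {q n : ℕ} (hK : Fintype.card K = q ^ n) (hn : n ≠ 0) :
    Nat.card {t : K // t ^ q = t} = q := by
  classical
  have hK1 : 1 < Fintype.card K := Fintype.one_lt_card
  have hq : 1 < q := (Nat.one_lt_pow_iff hn).mp (hK ▸ hK1)
  have hg0 : (X ^ Fintype.card K - X : K[X]) ≠ 0 := X_pow_card_sub_X_ne_zero K hK1
  -- `X ^ q - X` divides `X ^ |K| - X = ∏ x : K, (X - x)`, so it splits with simple roots.
  have hdvd : (X ^ q - X : K[X]) ∣ X ^ Fintype.card K - X := by
    simpa [hK] using dvd_pow_pow_sub_self_of_dvd (r := (X : K[X])) (p := q) (one_dvd n)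
  have hsplit : (X ^ q - X : K[X]).Splits :=
    (splits_iff_card_roots.mpr (by
      rw [roots_X_pow_card_sub_X, X_pow_card_sub_X_natDegree_eq K hK1]; rfl)).of_dvd hg0 hdvd
  have hnodup : (X ^ q - X : K[X]).roots.Nodup :=
    Multiset.nodup_of_le (roots.le_of_dvd hg0 hdvd) (roots_X_pow_card_sub_X K ▸ Finset.nodup _)
  calc Nat.card {t : K // t ^ q = t} = Nat.card (X ^ q - X : K[X]).roots.toFinset :=
        Nat.card_congr <| Equiv.subtypeEquivRight fun t => by
          simp [mem_roots (X_pow_card_sub_X_ne_zero K hq), sub_eq_zero]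
    _ = q := by
      rw [Nat.card_eq_fintype_card, Fintype.card_coe, Multiset.toFinset_card_of_nodup hnodup,
        ← hsplit.natDegree_eq_card_roots, X_pow_card_sub_X_natDegree_eq K hq]

section Linearized

variable {F : Type*} [Field F]

theorem add_pow_pow_of_eq_expChar_pow {p : ℕ} [ExpChar F p] {k q : ℕ} (hq : q = p ^ k)
    (j : ℕ) (x y : F) : (x + y) ^ q ^ j = x ^ q ^ j + y ^ q ^ j := by
  rw [hq, ← pow_mul]; exact add_pow_expChar_pow x y p (k * j)

theorem sub_pow_pow_of_eq_expChar_pow {p : ℕ} [ExpChar F p] {k q : ℕ} (hq : q = p ^ k)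
    (j : ℕ) (x y : F) : (x - y) ^ q ^ j = x ^ q ^ j - y ^ q ^ j := by
  rw [hq, ← pow_mul]; exact sub_pow_expChar_pow x y (k * j)

theorem div_pow_eq_self_of_linearized_eq_zero {q : ℕ} {α β m m₀ : F} (hα : α ≠ 0)
    (hm₀ : m₀ ≠ 0) (hm₀ker : m₀ ^ q * α + m₀ * β = 0) (hm : m ^ q * α + m * β = 0) :
    (m / m₀) ^ q = m / m₀ := by
  rw [div_pow, div_eq_div_iff (pow_ne_zero q hm₀) hm₀]
  refine mul_right_cancel₀ hα ?_
  linear_combination m₀ * hm - m * hm₀ker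

theorem natCard_affine_solutions_eq {p : ℕ} [ExpChar F p] {k q : ℕ} (hq : q = p ^ k)
    {α β c m₀ m₁ : F} (hα : α ≠ 0) (hm₀ : m₀ ≠ 0) (hm₀fix : m₀ ^ q ^ 2 = m₀)
    (hm₀ker : m₀ ^ q * α + m₀ * β = 0) (hm₁fix : m₁ ^ q ^ 2 = m₁)
    (hm₁ : m₁ ^ q * α + m₁ * β + c = 0) :
    Nat.card {m : F // m ^ q ^ 2 = m ∧ m ^ q * α + m * β + c = 0}
      = Nat.card {t : F // t ^ q = t} := by
  have frob_add (x y : F) : (x + y) ^ q = x ^ q + y ^ q :=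
    pow_one q ▸ add_pow_pow_of_eq_expChar_pow hq 1 x y
  have frob_sub (x y : F) : (x - y) ^ q = x ^ q - y ^ q :=
    pow_one q ▸ sub_pow_pow_of_eq_expChar_pow hq 1 x y
  refine Nat.card_congr
    { toFun m :=
        ⟨(m.1 - m₁) / m₀, div_pow_eq_self_of_linearized_eq_zero hα hm₀ hm₀ker ?_⟩
      invFun t := ⟨m₁ + t.1 * m₀, ?_, ?_⟩
      left_inv m := by ext; field_simp; ring
      right_inv t := by ext; field_simp; ring }
  · rw [frob_sub]
    linear_combination m.2.2 - hm₁
  · have ht2 : t.1 ^ q ^ 2 = t.1 := by rw [sq, pow_mul, t.2, t.2]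
    rw [add_pow_pow_of_eq_expChar_pow hq, mul_pow, ht2, hm₀fix, hm₁fix]
  · rw [frob_add, mul_pow, t.2]
    linear_combination hm₁ + t.1 * hm₀ker

theorem sub_pow_sq_pow_eq_of_trace_eq_zero {p : ℕ} [ExpChar F p] {k q : ℕ} (hq : q = p ^ k)
    {a : F} (h6 : a ^ q ^ 6 = a)
    (hA : (a ^ (q + 1) - a ^ (q ^ 2 + q)) + (a ^ (q + 1) - a ^ (q ^ 2 + q)) ^ q ^ 2
      + (a ^ (q + 1) - a ^ (q ^ 2 + q)) ^ q ^ 4 = 0) :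
    (a - a ^ q ^ 2) ^ (q ^ 4 + q ^ 3) = (a - a ^ q ^ 2) ^ (q + 1) := by
  have frob := sub_pow_pow_of_eq_expChar_pow (F := F) hq
  have h6' (e : ℕ) : a ^ (q ^ 6 + e) = a * a ^ e := by rw [pow_add, h6]
  have hA2 : (a ^ (q + 1) - a ^ (q ^ 2 + q)) ^ q ^ 2
      = a ^ (q ^ 3 + q ^ 2) - a ^ (q ^ 4 + q ^ 3) := by
    rw [frob, ← pow_mul, ← pow_mul]; ring
  have hA4 : (a ^ (q + 1) - a ^ (q ^ 2 + q)) ^ q ^ 4 = a ^ (q ^ 5 + q ^ 4) - a * a ^ q ^ 5 := by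
    rw [frob, ← pow_mul, ← pow_mul, ← h6']; ring
  have hd1 : (a - a ^ q ^ 2) ^ q = a ^ q - a ^ q ^ 3 := by
    rw [← pow_one q, frob, ← pow_mul]; ring
  have hd3 : (a - a ^ q ^ 2) ^ q ^ 3 = a ^ q ^ 3 - a ^ q ^ 5 := by
    rw [frob, ← pow_mul]; ring
  have hd4 : (a - a ^ q ^ 2) ^ q ^ 4 = a ^ q ^ 4 - a := by
    rw [frob, ← pow_mul, show q ^ 2 * q ^ 4 = q ^ 6 by ring, h6]
  rw [pow_add, pow_succ (a - a ^ q ^ 2) q, hd1, hd3, hd4]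
  rw [hA2, hA4] at hA
  linear_combination -hA

theorem pow_sq_eq_self_of_pow_add_eq {q : ℕ} {d : F} (h : d ^ (q ^ 4 + q ^ 3) = d ^ (q + 1)) :
    (d ^ (q ^ 3 + q ^ 2 + q)) ^ q ^ 2 = d ^ (q ^ 3 + q ^ 2 + q) :=
  calc (d ^ (q ^ 3 + q ^ 2 + q)) ^ q ^ 2 = (d ^ (q ^ 4 + q ^ 3)) ^ q * d ^ q ^ 3 := by ring
    _ = d ^ (q ^ 3 + q ^ 2 + q) := by rw [h]; ring

end Linearized

theorem stmt17_general (p k q : ℕ) (hp : p.Prime) (hq : q = p ^ k)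
    (F : Type*) [Field F] [Fintype F] (hF : Fintype.card F = q ^ 6)
    (a c : F) (ha : a ^ q ^ 2 ≠ a)
    (hA : (a ^ (q + 1) - a ^ (q ^ 2 + q))
      + (a ^ (q + 1) - a ^ (q ^ 2 + q)) ^ q ^ 2
      + (a ^ (q + 1) - a ^ (q ^ 2 + q)) ^ q ^ 4 = 0)
    (hex : ∃ m : F, m ^ q ^ 2 = m ∧
      m ^ q * (a - a ^ q ^ 2) ^ (q + 1)
        + m * ((a - a ^ q ^ 2) * (a - a ^ q ^ 4)) + c = 0) :
    Nat.card {m : F // m ^ q ^ 2 = m ∧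
      m ^ q * (a - a ^ q ^ 2) ^ (q + 1)
        + m * ((a - a ^ q ^ 2) * (a - a ^ q ^ 4)) + c = 0} = q := by
  have : Fact p.Prime := ⟨hp⟩
  have : CharP F p := charP_of_card_eq_prime_pow (f := k * 6) (by rw [hF, hq, pow_mul])
  have h6 (x : F) : x ^ q ^ 6 = x := hF ▸ FiniteField.pow_card x
  obtain ⟨m₁, hm₁fix, hm₁⟩ := hex
  have hrel := sub_pow_sq_pow_eq_of_trace_eq_zero hq (h6 a) hA
  generalize hd_def : a - a ^ q ^ 2 = d at hm₁ hrel ⊢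
  have hd : d ≠ 0 := hd_def ▸ sub_ne_zero.mpr ha.symm
  have hβ : a - a ^ q ^ 4 = -d ^ q ^ 4 := by
    rw [← hd_def, sub_pow_pow_of_eq_expChar_pow hq, ← pow_mul,
      show q ^ 2 * q ^ 4 = q ^ 6 by ring, h6]
    ring
  rw [natCard_affine_solutions_eq hq (pow_ne_zero _ hd) (pow_ne_zero _ hd)
    (pow_sq_eq_self_of_pow_add_eq hrel) (by rw [hβ]; ring) hm₁fix hm₁]
  exact FiniteField.natCard_pow_eq_self_of_card_eq_pow hF (by norm_num)

theorem stmt17 (p k q : ℕ) (hp : p.Prime) (hk : 0 < k) (hq : q = p ^ k)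
    (F : Type*) [Field F] [Fintype F] (hF : Fintype.card F = q ^ 6)
    (a b c : F) (ha : a ^ q ^ 2 ≠ a)
    (hA : (a ^ (q + 1) - a ^ (q ^ 2 + q))
      + (a ^ (q + 1) - a ^ (q ^ 2 + q)) ^ q ^ 2
      + (a ^ (q + 1) - a ^ (q ^ 2 + q)) ^ q ^ 4 = 0)
    (hex : ∃ m : F, m ^ q ^ 2 = m ∧
      m ^ q * (a - a ^ q ^ 2) ^ (q + 1)
        + m * ((a - a ^ q ^ 2) * (a - a ^ q ^ 4)) + c = 0) :
    Nat.card {m : F // m ^ q ^ 2 = m ∧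
      m ^ q * (a - a ^ q ^ 2) ^ (q + 1)
        + m * ((a - a ^ q ^ 2) * (a - a ^ q ^ 4)) + c = 0} = q :=
  stmt17_general p k q hp hq F hF a c ha hA hex
end
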